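/- Let q be an odd prime power, m ≥ 6, and n = (q^m-1)/2. The third largest q-cyclotomic coset leader modulo n is δ₃ = (q^m - 1 - q^{m-1} - q^{⌊(m+3)/2⌋})/2, and its q-cyclotomic coset has size m. -/

import Mathlib

/-!
Put `N = q ^ m - 1 = 2 n`. Multiplication by `q` modulo `N` rotates the `m` base-`q` digits of a
residue, and `s ↦ N - 2 s` turns the coset leaders modulo `n` into the coset maxima modulo `N`.
The complement of `δ₃` is `q ^ (m - 1) + q ^ h` with `h = ⌊(m + 3) / 2⌋`: all its rotations are
at most itself, and none of the nontrivial ones fixes it because `2 h + 2 ≠ m`. The complement of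
a leader `s` with `δ₃ < s < n` is an even coset maximum below `q ^ (m - 1) + q ^ h`; comparing it
with the rotations that bring each of its nonzero digits to the top shows it is
`q ^ (m - 1) + q ^ p` with `m - 2 ≤ 2 p < 2 h`, that is, the complement of `δ₁` or `δ₂`.
-/

namespace CyclotomicCoset

theorem add_mul_lt_mul_sub_one {a b Q Q' : ℕ} (ha : a < Q') (hb : b < Q)
    (hx : Q * a + b < Q * Q' - 1) : a + b * Q' < Q * Q' - 1 := by
  have hQQ : 1 ≤ Q * Q' := Nat.mul_pos (by omega) (by omega)
  zify [hQQ] at hx ⊢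
  rcases (Nat.succ_le_of_lt hb).eq_or_lt with rfl | h
  · push_cast at hx ⊢
    nlinarith
  · have : (b : ℤ) + 2 ≤ Q := by omega
    nlinarith

section Rotation

variable {q m : ℕ}

theorem pow_modEq_pow_mod (hq : 0 < q) (c : ℕ) : q ^ c ≡ q ^ (c % m) [MOD q ^ m - 1] := by
  have hqm : q ^ m ≡ 1 [MOD q ^ m - 1] :=
    ((Nat.modEq_iff_dvd' (Nat.one_le_pow _ _ hq)).mpr dvd_rfl).symm
  calc q ^ c = (q ^ m) ^ (c / m) * q ^ (c % m) := by rw [← pow_mul, ← pow_add, Nat.div_add_mod]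
    _ ≡ 1 ^ (c / m) * q ^ (c % m) [MOD q ^ m - 1] := (hqm.pow _).mul_right _
    _ = q ^ (c % m) := by rw [one_pow, one_mul]

theorem coprime_pow_pow_sub_one (hq : 0 < q) (hm : 0 < m) (j : ℕ) :
    Nat.Coprime (q ^ j) (q ^ m - 1) := by
  have h : Nat.Coprime (q ^ m) (q ^ m - 1) :=
    (Nat.coprime_self_sub_right (Nat.one_le_pow _ _ hq)).mpr (Nat.coprime_one_right _)
  exact (h.coprime_dvd_left (dvd_pow_self q hm.ne')).pow_left j

theorem mul_pow_mod_add_mul_pow_mod (hq : 0 < q) (hm : 0 < m) {x y : ℕ} (hx : 0 < x)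
    (hy : 0 < y) (hxy : x + y = q ^ m - 1) (j : ℕ) :
    x * q ^ j % (q ^ m - 1) + y * q ^ j % (q ^ m - 1) = q ^ m - 1 := by
  have hN : 0 < q ^ m - 1 := by omega
  have hdvd : q ^ m - 1 ∣ x * q ^ j % (q ^ m - 1) + y * q ^ j % (q ^ m - 1) := by
    rw [Nat.dvd_iff_mod_eq_zero, ← Nat.add_mod, ← add_mul, hxy, Nat.mul_mod_right]
  have hy0 : y * q ^ j % (q ^ m - 1) ≠ 0 := fun h0 =>
    absurd (Nat.le_of_dvd hy (((coprime_pow_pow_sub_one hq hm j).symm).dvd_of_dvd_mul_right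
      (Nat.dvd_of_mod_eq_zero h0))) (by omega)
  have := Nat.mod_lt (x * q ^ j) hN
  have := Nat.mod_lt (y * q ^ j) hN
  exact Nat.eq_of_dvd_of_lt_two_mul (by omega) hdvd (by omega)

/-- Multiplication by `q ^ (m - k)` moves the lowest `k` base-`q` digits of `x` to the top. -/
theorem mul_pow_sub_mod (hq : 0 < q) {k x : ℕ} (hk : k ≤ m) (hx : x < q ^ m - 1) :
    x * q ^ (m - k) % (q ^ m - 1) = x / q ^ k + x % q ^ k * q ^ (m - k) := by
  have hQ : q ^ k * q ^ (m - k) = q ^ m := by rw [← pow_add, Nat.add_sub_cancel' hk]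
  have hk0 : 0 < q ^ k := Nat.pow_pos hq
  have hb : x % q ^ k < q ^ k := Nat.mod_lt x hk0
  have ha : x / q ^ k < q ^ (m - k) := by
    rw [Nat.div_lt_iff_lt_mul hk0, mul_comm, hQ]; omega
  have hdm : q ^ k * (x / q ^ k) + x % q ^ k = x := Nat.div_add_mod x _
  generalize x / q ^ k = a at *
  generalize x % q ^ k = b at *
  subst hdm
  rw [← hQ] at hx ⊢
  have hsplit : (q ^ k * a + b) * q ^ (m - k) =
      (q ^ k * q ^ (m - k) - 1) * a + (a + b * q ^ (m - k)) := by
    zify [Nat.mul_pos hk0 (Nat.pow_pos hq : 0 < q ^ (m - k))]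
    ring
  rw [hsplit, Nat.mul_add_mod, Nat.mod_eq_of_lt (add_mul_lt_mul_sub_one ha hb hx)]

end Rotation

def IsCosetMax (q N x : ℕ) : Prop := ∀ j, x * q ^ j % N ≤ x

namespace IsCosetMax

variable {q m x : ℕ}

theorem div_add_mod_mul_le (hx : IsCosetMax q (q ^ m - 1) x) (hxN : x < q ^ m - 1)
    (hq : 0 < q) {k : ℕ} (hk : k ≤ m) :
    x / q ^ k + x % q ^ k * q ^ (m - k) ≤ x := by
  rw [← mul_pow_sub_mod hq hk hxN]
  exact hx _

theorem pow_pred_le (hx : IsCosetMax q (q ^ m - 1) x) (hxN : x < q ^ m - 1)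
    (hq : 1 < q) (hx0 : 0 < x) : q ^ (m - 1) ≤ x := by
  by_contra! hlt
  have hm : 0 < m := Nat.pos_of_ne_zero (by rintro rfl; simp at hxN)
  have h := hx.div_add_mod_mul_le hxN (by omega) (Nat.sub_le m 1)
  rw [Nat.div_eq_of_lt hlt, Nat.mod_eq_of_lt hlt, Nat.sub_sub_self hm, pow_one] at h
  nlinarith

theorem mod_pow_lt (hx : IsCosetMax q (q ^ m - 1) x) (hxN : x < q ^ m - 1)
    (hq : 0 < q) (hx2 : x < 2 * q ^ (m - 1)) {k : ℕ} (hk0 : 0 < k) (hk : k ≤ m) :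
    x % q ^ k < 2 * q ^ (k - 1) := by
  have h := hx.div_add_mod_mul_le hxN hq hk
  have hsplit : q ^ (m - 1) = q ^ (k - 1) * q ^ (m - k) := by rw [← pow_add]; congr 1; omega
  rw [hsplit, ← mul_assoc] at hx2
  exact Nat.lt_of_mul_lt_mul_right ((le_of_add_le_right h).trans_lt hx2)

/-- The lowest `k` digits of a coset maximum `x < 2 q ^ (m - 1)` begin with a single digit `1`. -/
theorem exists_mod_pow_eq (hx : IsCosetMax q (q ^ m - 1) x) (hxN : x < q ^ m - 1)
    (hq : 1 < q) (hx2 : x < 2 * q ^ (m - 1)) {k : ℕ} (hk : k ≤ m)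
    (h0 : x % q ^ k ≠ 0) :
    ∃ e < k, x % q ^ k = x % q ^ (e + 1) ∧ x % q ^ (e + 1) = q ^ e + x % q ^ e := by
  set e := Nat.log q (x % q ^ k)
  have he1 : q ^ e ≤ x % q ^ k := Nat.pow_log_le_self q h0
  have he2 : x % q ^ k < q ^ (e + 1) := Nat.lt_pow_succ_log_self hq _
  have hek : e < k :=
    (Nat.pow_lt_pow_iff_right hq).mp (he1.trans_lt (Nat.mod_lt x (by positivity)))
  have hw : x % q ^ (e + 1) = x % q ^ k := by
    rw [← Nat.mod_mod_of_dvd x (pow_dvd_pow q hek), Nat.mod_eq_of_lt he2]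
  have hw2 := hx.mod_pow_lt hxN (by omega) hx2 (k := e + 1) (by omega) (by omega)
  rw [Nat.add_sub_cancel, hw] at hw2
  have hlow : x % q ^ e = x % q ^ k - q ^ e := by
    rw [← Nat.mod_mod_of_dvd x (pow_dvd_pow q (Nat.le_succ e)), hw, Nat.mod_eq_sub_mod he1,
      Nat.mod_eq_of_lt (by omega)]
  exact ⟨e, hek, hw.symm, by omega⟩

theorem pow_add_pow_le (hx : IsCosetMax q (q ^ m - 1) x) (hxN : x < q ^ m - 1)
    (hq : 0 < q) {a b : ℕ} (ha : a < m) (h : q ^ a + q ^ b ≤ x % q ^ (a + 1)) :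
    q ^ (m - 1) + q ^ (b + (m - 1 - a)) ≤ x := by
  have hr := hx.div_add_mod_mul_le hxN hq ha
  calc q ^ (m - 1) + q ^ (b + (m - 1 - a)) = (q ^ a + q ^ b) * q ^ (m - (a + 1)) := by
        rw [add_mul, ← pow_add, ← pow_add]; congr 2 <;> omega
    _ ≤ x % q ^ (a + 1) * q ^ (m - (a + 1)) := Nat.mul_le_mul_right _ h
    _ ≤ x := le_of_add_le_right hr

theorem pow_pred_add_pow_le (hx : IsCosetMax q (q ^ m - 1) x) (hxN : x < q ^ m - 1)
    (hq : 0 < q) {a : ℕ} (ha : a + 1 < m) (htop : q ^ (m - 1) ≤ x)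
    (h : q ^ a ≤ x % q ^ (a + 1)) : q ^ (m - 1) + q ^ (m - 2 - a) ≤ x := by
  have hr := hx.div_add_mod_mul_le hxN hq ha.le
  have hdiv : q ^ (m - 2 - a) ≤ x / q ^ (a + 1) := by
    rw [show m - 2 - a = m - 1 - (a + 1) by omega, ← Nat.pow_div (by omega) hq]
    exact Nat.div_le_div_right htop
  have hmod : q ^ (m - 1) ≤ x % q ^ (a + 1) * q ^ (m - (a + 1)) :=
    calc q ^ (m - 1) = q ^ a * q ^ (m - (a + 1)) := by rw [← pow_add]; congr 1; omega
      _ ≤ _ := Nat.mul_le_mul_right _ h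
  omega

end IsCosetMax

theorem add_mod_eq_of_lt {a b m : ℕ} (ha : a < m) (hb : b < m) :
    (a + b) % m = if a + b < m then a + b else a + b - m := by
  split_ifs with h
  · exact Nat.mod_eq_of_lt h
  · rw [Nat.mod_eq_sub_mod (not_lt.mp h), Nat.mod_eq_of_lt (by omega)]

section TwoDigits

variable {q m h : ℕ}

theorem two_mul_pow_pred_lt (hq : 3 ≤ q) (hm : 2 ≤ m) : 2 * q ^ (m - 1) < q ^ m - 1 := by
  have h1 : q ^ (m - 1) * q = q ^ m := by rw [← pow_succ]; congr 1; omega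
  have h2 : q ^ (m - 1) * 3 ≤ q ^ (m - 1) * q := Nat.mul_le_mul_left _ hq
  have h3 : q ≤ q ^ (m - 1) := Nat.le_self_pow (by omega) _
  omega

theorem le_of_pow_add_pow_le_of_lt (hq : 1 < q) {c e p x : ℕ} (h1 : q ^ c + q ^ e ≤ x)
    (h2 : x < q ^ c + q ^ (p + 1)) : e ≤ p :=
  Nat.lt_add_one_iff.mp ((Nat.pow_lt_pow_iff_right hq).mp (by omega))

theorem pow_add_pow_lt_pow (hq : 1 < q) {a c d : ℕ} (hcd : c ≠ d) (hc : c < a) (hd : d < a) :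
    q ^ c + q ^ d < q ^ a := by
  wlog hlt : c < d generalizing c d
  · exact add_comm (q ^ d) (q ^ c) ▸ this hcd.symm hd hc (by omega)
  have h1 := Nat.pow_lt_pow_right hq hlt
  have h2 : q ^ d * q ≤ q ^ a := by rw [← pow_succ]; exact Nat.pow_le_pow_right (by omega) hd
  have h3 : q ^ d * 2 ≤ q ^ d * q := Nat.mul_le_mul_left _ hq
  omega

theorem pow_add_pow_mul_pow_mod (hq : 3 ≤ q) (hm : 2 ≤ m) (a b j : ℕ) :
    (q ^ a + q ^ b) * q ^ j % (q ^ m - 1) = q ^ ((a + j) % m) + q ^ ((b + j) % m) := by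
  have hcong :
      (q ^ a + q ^ b) * q ^ j ≡ q ^ ((a + j) % m) + q ^ ((b + j) % m) [MOD q ^ m - 1] := by
    rw [add_mul, ← pow_add, ← pow_add]
    exact (pow_modEq_pow_mod (by omega) _).add (pow_modEq_pow_mod (by omega) _)
  have hle : ∀ c, q ^ (c % m) ≤ q ^ (m - 1) := fun c =>
    Nat.pow_le_pow_right (by omega) (Nat.le_sub_one_of_lt (Nat.mod_lt c (by omega)))
  have h1 := hle (a + j)
  have h2 := hle (b + j)
  rw [hcong, Nat.mod_eq_of_lt (by have := two_mul_pow_pred_lt hq hm; omega)]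

theorem pow_sub_one_sub_two_mul_div_two (hq : 3 ≤ q) (hqodd : Odd q) {e : ℕ} (he : e + 1 < m) :
    q ^ m - 1 - 2 * ((q ^ m - 1 - q ^ (m - 1) - q ^ e) / 2) = q ^ (m - 1) + q ^ e := by
  have := two_mul_pow_pred_lt hq (by omega : 2 ≤ m)
  have : q ^ e ≤ q ^ (m - 1) := Nat.pow_le_pow_right (by omega) (by omega)
  have := Nat.odd_iff.mp (hqodd.pow (n := m))
  have := Nat.odd_iff.mp (hqodd.pow (n := m - 1))
  have := Nat.odd_iff.mp (hqodd.pow (n := e))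
  omega

theorem isCosetMax_pow_pred_add_pow (hq : 3 ≤ q) (hh : h + 1 < m) (hhm : m ≤ 2 * h + 2) :
    IsCosetMax q (q ^ m - 1) (q ^ (m - 1) + q ^ h) := by
  intro j
  rw [pow_add_pow_mul_pow_mod hq (by omega), ← Nat.add_mod_mod, ← Nat.add_mod_mod h]
  have hi := Nat.mod_lt j (by omega : 0 < m)
  generalize j % m = i at hi ⊢
  have hpos : ((m - 1 + i) % m = m - 1 ∧ (h + i) % m = h) ∨ ((h + i) % m = m - 1 ∧
      (m - 1 + i) % m ≤ h) ∨ ((m - 1 + i) % m < m - 1 ∧ (h + i) % m < m - 1 ∧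
      (m - 1 + i) % m ≠ (h + i) % m) := by
    rw [add_mod_eq_of_lt (by omega) hi, add_mod_eq_of_lt (by omega) hi]
    split_ifs <;> omega
  rcases hpos with ⟨hc, hd⟩ | ⟨hd, hc⟩ | ⟨hc, hd, hcd⟩
  · rw [hc, hd]
  · rw [hd, add_comm]
    exact Nat.add_le_add_left (Nat.pow_le_pow_right (by omega) hc) _
  · exact (pow_add_pow_lt_pow (by omega) hcd hc hd).le.trans (Nat.le_add_right _ _)

theorem pow_pred_add_pow_mul_pow_mod_ne (hq : 3 ≤ q) (hh : h + 1 < m) (hhm : 2 * h + 2 ≠ m)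
    {l : ℕ} (hl0 : 0 < l) (hlm : l < m) :
    (q ^ (m - 1) + q ^ h) * q ^ l % (q ^ m - 1) ≠ q ^ (m - 1) + q ^ h := by
  rw [pow_add_pow_mul_pow_mod hq (by omega)]
  have hc : (m - 1 + l) % m = l - 1 := by
    rw [add_mod_eq_of_lt (by omega) hlm]; split_ifs <;> omega
  rw [hc]
  intro heq
  by_cases hd : (h + l) % m = m - 1
  · rw [hd, add_comm (q ^ (l - 1))] at heq
    have hl : l - 1 = h := Nat.pow_right_injective (by omega) (Nat.add_left_cancel heq)
    rw [add_mod_eq_of_lt (by omega) hlm] at hd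
    split_ifs at hd <;> omega
  · have hd' : (h + l) % m < m - 1 := by have := Nat.mod_lt (h + l) (by omega : 0 < m); omega
    have hcd : l - 1 ≠ (h + l) % m := by
      rw [add_mod_eq_of_lt (by omega) hlm]; split_ifs <;> omega
    have := pow_add_pow_lt_pow (by omega : 1 < q) hcd (by omega) hd'
    omega

end TwoDigits

def IsCosetLeader (q n s : ℕ) : Prop := ∀ j, s ≤ s * q ^ j % n

section Complement

variable {q m n s : ℕ}

theorem two_mul_mul_pow_mod_add (hq : 0 < q) (hm : 0 < m) (hn : q ^ m - 1 = 2 * n) (hs0 : 0 < s)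
    (hsn : s < n) (j : ℕ) :
    2 * (s * q ^ j % n) + (q ^ m - 1 - 2 * s) * q ^ j % (q ^ m - 1) = q ^ m - 1 := by
  rw [← Nat.mul_mod_mul_left, ← mul_assoc, ← hn]
  exact mul_pow_mod_add_mul_pow_mod hq hm (by omega) (by omega) (by omega) j

theorem isCosetLeader_iff (hq : 0 < q) (hm : 0 < m) (hn : q ^ m - 1 = 2 * n) (hs0 : 0 < s)
    (hsn : s < n) : IsCosetLeader q n s ↔ IsCosetMax q (q ^ m - 1) (q ^ m - 1 - 2 * s) :=
  forall_congr' fun j => by have := two_mul_mul_pow_mod_add hq hm hn hs0 hsn j; omega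

theorem mul_pow_modEq_self_iff (hq : 0 < q) (hm : 0 < m) (hn : q ^ m - 1 = 2 * n) (hs0 : 0 < s)
    (hsn : s < n) (j : ℕ) :
    s * q ^ j ≡ s [MOD n] ↔ (q ^ m - 1 - 2 * s) * q ^ j % (q ^ m - 1) = q ^ m - 1 - 2 * s := by
  have := two_mul_mul_pow_mod_add hq hm hn hs0 hsn j
  rw [Nat.ModEq, Nat.mod_eq_of_lt hsn]
  omega

end Complement

/-- A coset maximum whose top digits are `1, 0, …, 0, 1` (positions `m - 1` and `p`) has no further
nonzero digit once `4 p + 4 < 3 m`: by parity there would be two more `1`s, at `r` and `t`, and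
rotating each of `p`, `r`, `t` to the top shows that each of the gaps `p - r`, `r - t`, `t + 1`
is at least the top gap `m - 1 - p`. -/
theorem IsCosetMax.mod_pow_eq_zero {q m x p : ℕ} (hx : IsCosetMax q (q ^ m - 1) x)
    (hxN : x < q ^ m - 1) (hq : 3 ≤ q) (hqodd : Odd q) (hxe : Even x)
    (hx2 : x < 2 * q ^ (m - 1)) (hpx : x = q ^ (m - 1) + x % q ^ (p + 1))
    (hp : x % q ^ (p + 1) = q ^ p + x % q ^ p) (hpm : 4 * p + 4 < 3 * m) :
    x % q ^ p = 0 := by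
  by_contra hz
  have hodd : ∀ i, q ^ i % 2 = 1 := fun i => Nat.odd_iff.mp hqodd.pow
  have := Nat.even_iff.mp hxe
  have := hodd (m - 1)
  have := hodd p
  have hxub : x < q ^ (m - 1) + q ^ (p + 1) := by
    have : x % q ^ p < q ^ p := Nat.mod_lt x (by positivity)
    have : q ^ p * 2 ≤ q ^ p * q := Nat.mul_le_mul_left _ (by omega)
    rw [pow_succ]
    omega
  obtain ⟨r, hrp, hzr, hr⟩ := hx.exists_mod_pow_eq hxN (by omega) hx2 (by omega) hz
  have := hodd r
  have := Nat.zero_le (x % q ^ r)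
  obtain ⟨t, htr, hut, ht⟩ := hx.exists_mod_pow_eq hxN (by omega) hx2 (k := r) (by omega)
    (by omega)
  have := Nat.zero_le (x % q ^ t)
  have hpr := le_of_pow_add_pow_le_of_lt (by omega)
    (hx.pow_add_pow_le hxN (by omega) (a := p) (b := r) (by omega) (by omega)) hxub
  have hrt := le_of_pow_add_pow_le_of_lt (by omega)
    (hx.pow_add_pow_le hxN (by omega) (a := r) (b := t) (by omega) (by omega)) hxub
  have htp := le_of_pow_add_pow_le_of_lt (by omega)
    (hx.pow_pred_add_pow_le hxN (by omega) (a := t) (by omega) (by omega) (by omega)) hxub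
  omega

theorem IsCosetMax.eq_pow_pred_add_pow {q m x : ℕ} (hx : IsCosetMax q (q ^ m - 1) x)
    (hq : 3 ≤ q) (hqodd : Odd q) (hm : 6 ≤ m) (hx0 : 0 < x) (hxe : Even x)
    (hxlt : x < q ^ (m - 1) + q ^ ((m + 3) / 2)) :
    x = q ^ (m - 1) + q ^ ((m - 1) / 2) ∨ x = q ^ (m - 1) + q ^ ((m + 1) / 2) := by
  have hH : q ^ ((m + 3) / 2) ≤ q ^ (m - 1) := Nat.pow_le_pow_right (by omega) (by omega)
  have hx2 : x < 2 * q ^ (m - 1) := by omega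
  have hxN : x < q ^ m - 1 := hx2.trans (two_mul_pow_pred_lt hq (by omega))
  have htop := hx.pow_pred_le hxN (by omega) hx0
  have hy : x % q ^ (m - 1) = x - q ^ (m - 1) := by
    rw [Nat.mod_eq_sub_mod htop, Nat.mod_eq_of_lt (by omega)]
  have := Nat.even_iff.mp hxe
  have := Nat.odd_iff.mp (hqodd.pow (n := m - 1))
  obtain ⟨p, -, hyp, hp⟩ := hx.exists_mod_pow_eq hxN (by omega) hx2 (k := m - 1) (by omega)
    (by omega)
  have := Nat.zero_le (x % q ^ p)
  have hpH : p < (m + 3) / 2 :=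
    (Nat.pow_lt_pow_iff_right (by omega)).mp (show q ^ p < q ^ ((m + 3) / 2) by omega)
  have hz := hx.mod_pow_eq_zero hxN hq hqodd hxe hx2 (by omega) hp (by omega)
  have hpm : m - 2 - p ≤ p := by
    have := hx.pow_pred_add_pow_le hxN (by omega) (a := p) (by omega) htop (by omega)
    exact (Nat.pow_le_pow_iff_right (by omega : 1 < q)).mp (by omega)
  obtain rfl | rfl : p = (m - 1) / 2 ∨ p = (m + 1) / 2 := by omega
  · left; omega
  · right; omega

end CyclotomicCoset

open CyclotomicCoset

/-- For m ≥ 6, the third largest q-cyclotomic coset leader modulo n = (q^m-1)/2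
is δ₃ = (q^m - 1 - q^{m-1} - q^{⌊(m+3)/2⌋})/2, i.e. δ₃ is a coset leader, is
less than δ₂, every coset leader s with δ₃ < s < n equals δ₁ or δ₂, and the
q-cyclotomic coset of δ₃ has size m. -/
theorem stmt_9 (q m n d1 d2 d3 : ℕ) (hq : ∃ p k : ℕ, p.Prime ∧ 0 < k ∧ q = p ^ k)
    (hqodd : Odd q) (hm : 6 ≤ m)
    (hn : n = (q ^ m - 1) / 2)
    (hd1 : d1 = (q ^ m - 1 - q ^ (m - 1) - q ^ ((m - 1) / 2)) / 2)
    (hd2 : d2 = (q ^ m - 1 - q ^ (m - 1) - q ^ ((m + 1) / 2)) / 2)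
    (hd3 : d3 = (q ^ m - 1 - q ^ (m - 1) - q ^ ((m + 3) / 2)) / 2) :
    (∀ j : ℕ, d3 ≤ d3 * q ^ j % n) ∧
    d3 < d2 ∧
    (∀ s : ℕ, d3 < s → s < n → (∀ j : ℕ, s ≤ s * q ^ j % n) → s = d1 ∨ s = d2) ∧
    IsLeast {l : ℕ | 0 < l ∧ d3 * q ^ l ≡ d3 [MOD n]} m := by
  have hq3 : 3 ≤ q := by
    obtain ⟨p, k, hp, hk, hqpk⟩ := hq
    have := ((isPrimePow_nat_iff q).mpr ⟨p, k, hp, hk, hqpk.symm⟩).one_lt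
    have := Nat.odd_iff.mp hqodd
    omega
  have hN : q ^ m - 1 = 2 * n := by have := Nat.odd_iff.mp (hqodd.pow (n := m)); omega
  have hc3 := pow_sub_one_sub_two_mul_div_two hq3 hqodd (m := m) (e := (m + 3) / 2) (by omega)
  have hc2 := pow_sub_one_sub_two_mul_div_two hq3 hqodd (m := m) (e := (m + 1) / 2) (by omega)
  rw [← hd3] at hc3
  rw [← hd2] at hc2
  have hH : q ^ ((m + 1) / 2) < q ^ ((m + 3) / 2) := Nat.pow_lt_pow_right (by omega) (by omega)
  have hHm : q ^ ((m + 3) / 2) ≤ q ^ (m - 1) := Nat.pow_le_pow_right (by omega) (by omega)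
  have := two_mul_pow_pred_lt hq3 (by omega : 2 ≤ m)
  have hd30 : 0 < d3 := by omega
  have hd3n : d3 < n := by omega
  have hd32 : d3 < d2 := by omega
  refine ⟨?_, hd32, ?_, ⟨by omega, ?_⟩, fun l ⟨hl0, hl⟩ => ?_⟩
  · rw [← IsCosetLeader, isCosetLeader_iff (by omega) (by omega) hN hd30 hd3n, hc3]
    exact isCosetMax_pow_pred_add_pow hq3 (by omega) (by omega)
  · intro s hs hsn hlead
    rw [← IsCosetLeader, isCosetLeader_iff (by omega) (by omega) hN (by omega) hsn] at hlead
    have hsN : 0 < q ^ m - 1 - 2 * s := by omega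
    have hseven : Even (q ^ m - 1 - 2 * s) := by rw [Nat.even_iff]; omega
    rcases hlead.eq_pow_pred_add_pow hq3 hqodd hm hsN hseven (by omega) with h | h
    · left; omega
    · right; omega
  · have hqm : q ^ m ≡ 1 [MOD n] := ((Nat.modEq_iff_dvd' (by omega)).mpr ⟨2, by omega⟩).symm
    simpa using hqm.mul_left d3
  · by_contra! hlm
    rw [mul_pow_modEq_self_iff (by omega) (by omega) hN hd30 hd3n, hc3] at hl
    exact pow_pred_add_pow_mul_pow_mod_ne hq3 (by omega) (by omega) hl0 hlm hl
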